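/- For all x, y ∈ Hⁿ, one has ‖P₁(x, y)‖ + ‖P₂(x, y)‖ < 2. In particular, the Pogorelov map Φ maps Hⁿ × Hⁿ into Ω = {(a, b) ∈ ℝⁿ × ℝⁿ : ‖a‖ + ‖b‖ < 2}. -/

import Mathlib

open scoped BigOperators

noncomputable section

/-- The Minkowski product on `ℝ^{n+1}`: `⟨x,y⟩ = -x₀y₀ + ∑_{i=1}^n xᵢyᵢ`. -/
def mink {n : ℕ} (x y : Fin (n + 1) → ℝ) : ℝ :=
  -(x 0 * y 0) + ∑ i : Fin n, x i.succ * y i.succ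

/-- The vector `e = (1, 0, …, 0)` in `ℝ^{n+1}`. -/
def eVec (n : ℕ) : Fin (n + 1) → ℝ := fun i => if i = 0 then 1 else 0

/-- Projection `𝒫 : ℝ^{n+1} → ℝⁿ`, forgetting the 0-th coordinate, landing in
Euclidean space (with the Euclidean norm). -/
def proj {n : ℕ} (x : Fin (n + 1) → ℝ) : EuclideanSpace ℝ (Fin n) :=
  WithLp.toLp 2 (fun i : Fin n => x i.succ)

/-- The hyperboloid model `Hⁿ = {x : ⟨x,x⟩ = -1, x₀ > 0}`. -/
def Hyp (n : ℕ) : Set (Fin (n + 1) → ℝ) := {x | mink x x = -1 ∧ 0 < x 0}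

/-- First component of the Pogorelov map: `P₁(x,y) = 2𝒫(x)/(-⟨x+y,e⟩)`. -/
def P1 {n : ℕ} (x y : Fin (n + 1) → ℝ) : EuclideanSpace ℝ (Fin n) :=
  (2 / (-(mink (x + y) (eVec n)))) • proj x

/-- Second component of the Pogorelov map: `P₂(x,y) = 2𝒫(y)/(-⟨x+y,e⟩)`. -/
def P2 {n : ℕ} (x y : Fin (n + 1) → ℝ) : EuclideanSpace ℝ (Fin n) :=
  (2 / (-(mink (x + y) (eVec n)))) • proj y

/-- The function `f(a,b) = (2+‖a‖+‖b‖)(2-‖a‖+‖b‖)(2+‖a‖-‖b‖)(2-‖a‖-‖b‖)`. -/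
def fQ {n : ℕ} (a b : EuclideanSpace ℝ (Fin n)) : ℝ :=
  (2 + ‖a‖ + ‖b‖) * (2 - ‖a‖ + ‖b‖) * (2 + ‖a‖ - ‖b‖) * (2 - ‖a‖ - ‖b‖)

/-- The vector in `ℝ^{n+1}` with 0-th coordinate `t` and `𝒫`-projection `v`. -/
def liftVec {n : ℕ} (t : ℝ) (v : EuclideanSpace ℝ (Fin n)) : Fin (n + 1) → ℝ :=
  Fin.cons t (fun i => v i)

/-- First component of `Ψ(a,b)`, namely `(√(‖x̂‖²+1), x̂)` with `x̂ = 4a/√f(a,b)`. -/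
def Psi1 {n : ℕ} (a b : EuclideanSpace ℝ (Fin n)) : Fin (n + 1) → ℝ :=
  liftVec (Real.sqrt (‖(4 / Real.sqrt (fQ a b)) • a‖ ^ 2 + 1)) ((4 / Real.sqrt (fQ a b)) • a)

/-- Second component of `Ψ(a,b)`, namely `(√(‖ŷ‖²+1), ŷ)` with `ŷ = 4b/√f(a,b)`. -/
def Psi2 {n : ℕ} (a b : EuclideanSpace ℝ (Fin n)) : Fin (n + 1) → ℝ :=
  liftVec (Real.sqrt (‖(4 / Real.sqrt (fQ a b)) • b‖ ^ 2 + 1)) ((4 / Real.sqrt (fQ a b)) • b)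

theorem mink_eVec {n : ℕ} (z : Fin (n + 1) → ℝ) : mink z (eVec n) = -z 0 := by
  simp [mink, eVec, Fin.succ_ne_zero]

theorem norm_proj_sq {n : ℕ} (x : Fin (n + 1) → ℝ) : ‖proj x‖ ^ 2 = mink x x + x 0 ^ 2 := by
  rw [EuclideanSpace.norm_sq_eq, mink]
  simp [proj, sq]

theorem norm_proj_lt_of_mem_Hyp {n : ℕ} {x : Fin (n + 1) → ℝ} (hx : x ∈ Hyp n) :
    ‖proj x‖ < x 0 := by
  have h : ‖proj x‖ ^ 2 < x 0 ^ 2 := by rw [norm_proj_sq, hx.1]; linarith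
  exact abs_lt_of_sq_lt_sq' h hx.2.le |>.2

theorem norm_P1 {n : ℕ} (x y : Fin (n + 1) → ℝ) :
    ‖P1 x y‖ = 2 / |x 0 + y 0| * ‖proj x‖ := by
  rw [P1, norm_smul, mink_eVec, neg_neg, Pi.add_apply, Real.norm_eq_abs, abs_div, abs_two]

theorem norm_P2 {n : ℕ} (x y : Fin (n + 1) → ℝ) :
    ‖P2 x y‖ = 2 / |x 0 + y 0| * ‖proj y‖ := by
  rw [P2, norm_smul, mink_eVec, neg_neg, Pi.add_apply, Real.norm_eq_abs, abs_div, abs_two]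

theorem statement_5_general {n : ℕ} (x y : Fin (n + 1) → ℝ)
    (hx : x ∈ Hyp n) (hy : y ∈ Hyp n) :
    ‖P1 x y‖ + ‖P2 x y‖ < 2 := by
  have hxy : 0 < x 0 + y 0 := add_pos hx.2 hy.2
  rw [norm_P1, norm_P2, ← mul_add, abs_of_pos hxy, div_mul_eq_mul_div, div_lt_iff₀ hxy]
  linarith [norm_proj_lt_of_mem_Hyp hx, norm_proj_lt_of_mem_Hyp hy]

/-- the Pogorelov map sends `Hⁿ × Hⁿ` into
`Ω = {(a,b) : ‖a‖ + ‖b‖ < 2}`. -/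
theorem statement_5 {n : ℕ} (hn : 1 ≤ n) (x y : Fin (n + 1) → ℝ)
    (hx : x ∈ Hyp n) (hy : y ∈ Hyp n) :
    ‖P1 x y‖ + ‖P2 x y‖ < 2 :=
  statement_5_general x y hx hy
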